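/- For 0 < μ < 1 let S_μ = {(N, k₁, k₂, k₃) ∈ ℝ⁴ : N ≥ 1, 1 ≤ k₃ ≤ k₂ ≤ k₁, N³ k₁ k₂ k₃ ≤ μ^{−4}, N (k₁ k₂)³ ≤ μ^{−4} k₃} and let I(μ) = ∫_{S_μ} k₁² k₂ k₃ dN dk₁ dk₂ dk₃. Then lim_{μ→0⁺} (log I(μ)) / (log(1/μ)) = 28/5. -/

import Mathlib

open MeasureTheory Filter Real

/-- The region of `(N, k₁, k₂, k₃)` for M-theory vacua
`AdS₄ × S⁷/(ℤ_{k₁}×ℤ_{k₂}×ℤ_{k₃})` allowed by the cutoff `μ`. -/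
def ads4Region (μ : ℝ) : Set (ℝ × ℝ × ℝ × ℝ) :=
  {x | 1 ≤ x.1 ∧ 1 ≤ x.2.2.2 ∧ x.2.2.2 ≤ x.2.2.1 ∧ x.2.2.1 ≤ x.2.1 ∧
    x.1 ^ 3 * x.2.1 * x.2.2.1 * x.2.2.2 ≤ μ ^ (-(4 : ℝ)) ∧
    x.1 * (x.2.1 * x.2.2.1) ^ 3 ≤ μ ^ (-(4 : ℝ)) * x.2.2.2}

/-- The weighted count `I(μ) = ∫_{S_μ} k₁² k₂ k₃ dN dk₁ dk₂ dk₃`. -/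
noncomputable def ads4Count (μ : ℝ) : ℝ :=
  ∫ x in ads4Region μ, x.2.1 ^ 2 * x.2.2.1 * x.2.2.2

/-! Write `T = μ⁻⁴`, so that `ads4Count μ = count T` and `log T = 4 log (1/μ)`; it suffices that
`T^{7/5} ≪ count T ≪ T^{7/5} log T`.

Lower bound: for `2¹⁶ c⁵ = T` the box `N ∈ [1,2]`, `k₁ ∈ [4c,8c]`, `k₂ ∈ [2c,4c]`, `k₃ ∈ [c,2c]`
lies in the region, has volume `8c³` and carries weight `≥ 32c⁴`, so `count T ≥ 256 c⁷ ≍ T^{7/5}`.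

Upper bound: the M2 constraint `N (k₁k₂)³ ≤ T k₃ ≤ T k₂` gives `N k₁³ k₂² ≤ T`, hence
`k₁ ≤ T`, `k₂ ≤ (T/N)^{1/5}` and `k₃ ≤ k₂ ≤ (T/(N k₁³))^{1/2}`. Integrating the weight over that
rectangle in `(k₂, k₃)` leaves at most `(T/N)^{7/5} / k₁`, and integrating this over `N ≥ 1`,
`1 ≤ k₁ ≤ T` gives `(5/2) T^{7/5} log T`. -/

open scoped Topology

lemma lintegral_Icc_inv {a b : ℝ} (ha : 0 < a) (hab : a ≤ b) :
    ∫⁻ k in Set.Icc a b, ENNReal.ofReal k⁻¹ = ENNReal.ofReal (log (b / a)) := by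
  have hcont : ContinuousOn (fun k : ℝ => k⁻¹) (Set.Icc a b) :=
    continuousOn_inv₀.mono fun k hk => (ha.trans_le hk.1).ne'
  rw [← ofReal_integral_eq_lintegral_ofReal hcont.integrableOn_Icc
    (ae_restrict_of_forall_mem measurableSet_Icc fun k hk => inv_nonneg.2 (ha.le.trans hk.1)),
    integral_Icc_eq_integral_Ioc, ← intervalIntegral.integral_of_le hab,
    integral_inv_of_pos ha (ha.trans_le hab)]

lemma lintegral_Ici_rpow_neg {c p : ℝ} (hc : 0 < c) (hp : 1 < p) :
    ∫⁻ N in Set.Ici c, ENNReal.ofReal (N ^ (-p)) = ENNReal.ofReal (c ^ (1 - p) / (p - 1)) := by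
  have hint : IntegrableOn (fun N : ℝ => N ^ (-p)) (Set.Ici c) :=
    (integrableOn_Ici_iff_integrableOn_Ioi).2 (integrableOn_Ioi_rpow_of_lt (by linarith) hc)
  rw [← ofReal_integral_eq_lintegral_ofReal hint
    (ae_restrict_of_forall_mem measurableSet_Ici fun N hN => rpow_nonneg (hc.le.trans hN) _),
    integral_Ici_eq_integral_Ioi, integral_Ioi_rpow_of_lt (by linarith) hc,
    show -p + 1 = -(p - 1) by ring, div_neg, neg_div, neg_neg, neg_sub]

lemma tendsto_log_div_log_of_bounds {g : ℝ → ℝ} {a c C : ℝ} (hc : 0 < c) (hC : 0 < C)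
    (hlow : ∀ᶠ T in atTop, c * T ^ a ≤ g T) (hup : ∀ᶠ T in atTop, g T ≤ C * T ^ a * log T) :
    Tendsto (fun T => log (g T) / log T) atTop (𝓝 a) := by
  have hlow' : Tendsto (fun T => a + log c / log T) atTop (𝓝 a) := by
    simpa using tendsto_const_nhds.add (tendsto_const_nhds.div_atTop tendsto_log_atTop)
  have hup' : Tendsto (fun T => a + log C / log T + log (log T) / log T) atTop (𝓝 a) := by
    simpa using (tendsto_const_nhds.add (tendsto_const_nhds.div_atTop tendsto_log_atTop)).add
      (isLittleO_log_id_atTop.tendsto_div_nhds_zero.comp tendsto_log_atTop)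
  refine tendsto_of_tendsto_of_tendsto_of_le_of_le' hlow' hup' ?_ ?_
  · filter_upwards [hlow, eventually_gt_atTop 1] with T hT hT1
    have hlogT : 0 < log T := log_pos hT1
    rw [le_div_iff₀ hlogT]
    calc (a + log c / log T) * log T = log (c * T ^ a) := by
          rw [log_mul hc.ne' (by positivity), log_rpow (by linarith)]
          field_simp
          ring
      _ ≤ log (g T) := log_le_log (by positivity) hT
  · filter_upwards [hlow, hup, eventually_gt_atTop 1] with T hT hT' hT1
    have hlogT : 0 < log T := log_pos hT1
    rw [div_le_iff₀ hlogT]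
    calc log (g T) ≤ log (C * T ^ a * log T) := log_le_log (lt_of_lt_of_le (by positivity) hT) hT'
      _ = (a + log C / log T + log (log T) / log T) * log T := by
          rw [log_mul (by positivity) hlogT.ne', log_mul hC.ne' (by positivity),
            log_rpow (by linarith)]
          field_simp
          ring

namespace Ads4

def region (T : ℝ) : Set (ℝ × ℝ × ℝ × ℝ) :=
  {x | 1 ≤ x.1 ∧ 1 ≤ x.2.2.2 ∧ x.2.2.2 ≤ x.2.2.1 ∧ x.2.2.1 ≤ x.2.1 ∧
    x.1 ^ 3 * x.2.1 * x.2.2.1 * x.2.2.2 ≤ T ∧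
    x.1 * (x.2.1 * x.2.2.1) ^ 3 ≤ T * x.2.2.2}

def weight (x : ℝ × ℝ × ℝ × ℝ) : ℝ := x.2.1 ^ 2 * x.2.2.1 * x.2.2.2

lemma measurableSet_region (T : ℝ) : MeasurableSet (region T) := by
  unfold region; measurability

def box (c : ℝ) : Set (ℝ × ℝ × ℝ × ℝ) :=
  Set.Icc 1 2 ×ˢ Set.Icc (4 * c) (8 * c) ×ˢ Set.Icc (2 * c) (4 * c) ×ˢ Set.Icc c (2 * c)

lemma box_subset_region {c T : ℝ} (hc : 1 ≤ c) (hT : 2 ^ 16 * c ^ 5 ≤ T) :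
    box c ⊆ region T := by
  rintro ⟨N, k₁, k₂, k₃⟩ ⟨⟨hN, hN'⟩, ⟨hk₁, hk₁'⟩, ⟨hk₂, hk₂'⟩, ⟨hk₃, hk₃'⟩⟩
  dsimp only at *
  have hN3 : N ^ 3 ≤ 2 ^ 3 := pow_le_pow_left₀ (by linarith) hN' 3
  have hk₁₂ : k₁ * k₂ ≤ 32 * c ^ 2 := by nlinarith
  have hk : k₁ * k₂ * k₃ ≤ 64 * c ^ 3 := by nlinarith
  have hk₁₂0 : 0 ≤ k₁ * k₂ := by nlinarith
  have hT0 : 0 ≤ T := le_trans (by positivity) hT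
  have hc5 : c ^ 3 ≤ c ^ 5 := pow_le_pow_right₀ hc (by norm_num)
  refine ⟨hN, by linarith, by linarith, by linarith, ?_, ?_⟩
  · calc N ^ 3 * k₁ * k₂ * k₃ = N ^ 3 * (k₁ * k₂ * k₃) := by ring
      _ ≤ 2 ^ 3 * (64 * c ^ 3) := by gcongr; exact mul_nonneg hk₁₂0 (by linarith)
      _ ≤ T := by nlinarith
  · calc N * (k₁ * k₂) ^ 3 ≤ 2 * (32 * c ^ 2) ^ 3 := by gcongr
      _ = 2 ^ 16 * c ^ 5 * c := by ring
      _ ≤ T * k₃ := by gcongr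

lemma volume_box {c : ℝ} (hc : 0 ≤ c) : volume (box c) = ENNReal.ofReal (8 * c ^ 3) := by
  simp only [box, Measure.volume_eq_prod, Measure.prod_prod, Real.volume_Icc]
  rw [← ENNReal.ofReal_mul (by linarith), ← ENNReal.ofReal_mul (by linarith),
    ← ENNReal.ofReal_mul (by linarith)]
  ring_nf

lemma ofReal_le_lintegral_region {c T : ℝ} (hc : 1 ≤ c) (hT : 2 ^ 16 * c ^ 5 ≤ T) :
    ENNReal.ofReal (256 * c ^ 7) ≤ ∫⁻ x in region T, ENNReal.ofReal (weight x) := by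
  have hc0 : 0 ≤ c := by linarith
  calc ENNReal.ofReal (256 * c ^ 7) = ENNReal.ofReal (32 * c ^ 4) * volume (box c) := by
        rw [volume_box hc0, ← ENNReal.ofReal_mul (by positivity)]
        ring_nf
    _ = ∫⁻ _ in box c, ENNReal.ofReal (32 * c ^ 4) := (setLIntegral_const _ _).symm
    _ ≤ ∫⁻ x in box c, ENNReal.ofReal (weight x) := by
        refine setLIntegral_mono' (by unfold box; measurability) ?_
        rintro ⟨N, k₁, k₂, k₃⟩ ⟨-, ⟨hk₁, -⟩, ⟨hk₂, -⟩, ⟨hk₃, -⟩⟩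
        dsimp only at *
        refine ENNReal.ofReal_le_ofReal ?_
        calc 32 * c ^ 4 = (4 * c) ^ 2 * (2 * c) * c := by ring
          _ ≤ weight (N, k₁, k₂, k₃) := by
            dsimp only [weight]; gcongr; exact mul_nonneg (sq_nonneg _) (by linarith)
    _ ≤ ∫⁻ x in region T, ENNReal.ofReal (weight x) :=
        lintegral_mono_set (box_subset_region hc hT)

lemma bounds_of_mem_region {T N k₁ k₂ k₃ : ℝ} (h : (N, k₁, k₂, k₃) ∈ region T) :
    N ∈ Set.Ici 1 ∧ k₁ ∈ Set.Icc 1 T ∧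
      (k₂, k₃) ∈ Set.Icc 0 ((T / N) ^ (5⁻¹ : ℝ)) ×ˢ Set.Icc 0 √(T / (N * k₁ ^ 3)) := by
  obtain ⟨hN, hk₃, hk₃₂, hk₂₁, -, hM2⟩ := h
  dsimp only at *
  have hk₂ : 1 ≤ k₂ := hk₃.trans hk₃₂
  have hk₁ : 1 ≤ k₁ := hk₂.trans hk₂₁
  have hT : 0 ≤ T := by
    have : 0 ≤ N * (k₁ * k₂) ^ 3 := mul_nonneg (by linarith) (pow_nonneg (by nlinarith) 3)
    exact le_of_mul_le_mul_right (by linarith) (by linarith : 0 < k₃)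
  have hwrap : N * k₁ ^ 3 * k₂ ^ 2 ≤ T := by
    refine le_of_mul_le_mul_right ?_ (by linarith : 0 < k₂)
    calc N * k₁ ^ 3 * k₂ ^ 2 * k₂ = N * (k₁ * k₂) ^ 3 := by ring
      _ ≤ T * k₃ := hM2
      _ ≤ T * k₂ := by gcongr
  have hk₁T : k₁ ≤ T := by
    calc k₁ ≤ 1 * k₁ ^ 3 * 1 ^ 2 := by nlinarith [one_le_pow₀ (n := 2) hk₁]
      _ ≤ N * k₁ ^ 3 * k₂ ^ 2 := by gcongr
      _ ≤ T := hwrap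
  have hk₂5 : k₂ ^ 5 ≤ T / N := by
    rw [le_div_iff₀ (by linarith)]
    calc k₂ ^ 5 * N = N * k₂ ^ 3 * k₂ ^ 2 := by ring
      _ ≤ N * k₁ ^ 3 * k₂ ^ 2 := by gcongr
      _ ≤ T := hwrap
  refine ⟨hN, ⟨hk₁, hk₁T⟩, ⟨by linarith, ?_⟩, ⟨by linarith, ?_⟩⟩
  · rw [le_rpow_inv_iff_of_pos (by linarith) (by positivity) (by norm_num)]
    exact_mod_cast hk₂5
  · rw [le_sqrt (by linarith) (by positivity), le_div_iff₀ (by positivity)]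
    calc k₃ ^ 2 * (N * k₁ ^ 3) ≤ k₂ ^ 2 * (N * k₁ ^ 3) := by gcongr
      _ = N * k₁ ^ 3 * k₂ ^ 2 := by ring
      _ ≤ T := hwrap

lemma lintegral_slice_le (T N k₁ : ℝ) :
    ∫⁻ q : ℝ × ℝ, (region T).indicator (fun x => ENNReal.ofReal (weight x)) (N, k₁, q) ≤
      ENNReal.ofReal (T ^ (7 / 5 : ℝ)) *
        ((Set.Ici 1).indicator (fun N => ENNReal.ofReal (N ^ (-(7 / 5) : ℝ))) N *
          (Set.Icc 1 T).indicator (fun k => ENNReal.ofReal k⁻¹) k₁) := by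
  by_cases h : N ∈ Set.Ici 1 ∧ k₁ ∈ Set.Icc 1 T
  swap
  · have hzero : ∀ q : ℝ × ℝ,
        (region T).indicator (fun x => ENNReal.ofReal (weight x)) (N, k₁, q) = 0 := by
      rintro ⟨k₂, k₃⟩
      exact Set.indicator_of_notMem (fun hx => h ⟨(bounds_of_mem_region hx).1,
        (bounds_of_mem_region hx).2.1⟩) _
    simp only [hzero, lintegral_zero, zero_le]
  obtain ⟨hN, hk₁⟩ := h
  have hN0 : 0 < N := zero_lt_one.trans_le hN
  have hk₁0 : 0 < k₁ := zero_lt_one.trans_le hk₁.1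
  have hT0 : 0 < T := hk₁0.trans_le hk₁.2
  set a := (T / N) ^ (5⁻¹ : ℝ) with ha
  set b := √(T / (N * k₁ ^ 3)) with hb
  have ha5 : a ^ 5 = T / N := rpow_inv_natCast_pow (by positivity) (by norm_num)
  have ha7 : a ^ 7 = T ^ (7 / 5 : ℝ) * N ^ (-(7 / 5) : ℝ) := by
    rw [ha, ← rpow_natCast, ← rpow_mul (by positivity), div_rpow hT0.le hN0.le,
      rpow_neg hN0.le, div_eq_mul_inv]
    norm_num
  have hb2 : b ^ 2 = a ^ 5 / k₁ ^ 3 := by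
    rw [hb, sq_sqrt (by positivity), ha5, div_div]
  have hslice : ∀ q : ℝ × ℝ, (region T).indicator (fun x => ENNReal.ofReal (weight x)) (N, k₁, q)
      ≤ (Set.Icc 0 a ×ˢ Set.Icc 0 b).indicator (fun _ => ENNReal.ofReal (k₁ ^ 2 * a * b)) q := by
    rintro ⟨k₂, k₃⟩
    refine Set.indicator_apply_le' (fun hx => ?_) (fun _ => zero_le)
    have hq := (bounds_of_mem_region hx).2.2
    rw [Set.indicator_of_mem hq]
    obtain ⟨⟨hk₂, hk₂a⟩, ⟨hk₃, hk₃b⟩⟩ := hq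
    exact ENNReal.ofReal_le_ofReal (by dsimp only [weight]; gcongr)
  calc _ ≤ ∫⁻ q : ℝ × ℝ, (Set.Icc 0 a ×ˢ Set.Icc 0 b).indicator
          (fun _ => ENNReal.ofReal (k₁ ^ 2 * a * b)) q := lintegral_mono hslice
    _ = ENNReal.ofReal (k₁ ^ 2 * a * b) * (ENNReal.ofReal a * ENNReal.ofReal b) := by
        rw [lintegral_indicator_const (measurableSet_Icc.prod measurableSet_Icc),
          Measure.volume_eq_prod, Measure.prod_prod, Real.volume_Icc, Real.volume_Icc,
          sub_zero, sub_zero]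
    _ = ENNReal.ofReal (a ^ 7 * k₁⁻¹) := by
        rw [← ENNReal.ofReal_mul (by positivity), ← ENNReal.ofReal_mul (by positivity)]
        congr 1
        calc k₁ ^ 2 * a * b * (a * b) = k₁ ^ 2 * a ^ 2 * b ^ 2 := by ring
          _ = a ^ 7 * k₁⁻¹ := by rw [hb2]; field_simp
    _ = _ := by
        rw [Set.indicator_of_mem hN, Set.indicator_of_mem hk₁, ha7,
          ENNReal.ofReal_mul (by positivity), ENNReal.ofReal_mul (by positivity), mul_assoc]

lemma lintegral_region_le {T : ℝ} (hT : 1 ≤ T) :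
    ∫⁻ x in region T, ENNReal.ofReal (weight x) ≤
      ENNReal.ofReal (5 / 2 * T ^ (7 / 5 : ℝ) * log T) := by
  set F := fun x => ENNReal.ofReal (weight x)
  set g := (Set.Ici (1 : ℝ)).indicator fun N => ENNReal.ofReal (N ^ (-(7 / 5) : ℝ))
  set h := (Set.Icc 1 T).indicator fun k => ENNReal.ofReal k⁻¹
  have hg : Measurable g := by fun_prop (disch := exact measurableSet_Ici)
  have hh : Measurable h := by fun_prop (disch := exact measurableSet_Icc)
  calc ∫⁻ x in region T, F x = ∫⁻ x, (region T).indicator F x :=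
        (lintegral_indicator (measurableSet_region T) _).symm
    _ ≤ ∫⁻ N, ∫⁻ k₁, ∫⁻ q : ℝ × ℝ, (region T).indicator F (N, k₁, q) := by
        rw [Measure.volume_eq_prod]
        refine (lintegral_prod_le _).trans (lintegral_mono fun N => ?_)
        rw [Measure.volume_eq_prod]
        exact lintegral_prod_le _
    _ ≤ ∫⁻ N, ∫⁻ k₁, ENNReal.ofReal (T ^ (7 / 5 : ℝ)) * (g N * h k₁) :=
        lintegral_mono fun N => lintegral_mono fun k₁ => lintegral_slice_le T N k₁
    _ = ENNReal.ofReal (T ^ (7 / 5 : ℝ)) * ((∫⁻ N, g N) * ∫⁻ k₁, h k₁) := by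
        simp only [← mul_assoc, lintegral_const_mul _ hh,
          lintegral_mul_const _ (hg.const_mul _), lintegral_const_mul _ hg]
    _ = ENNReal.ofReal (T ^ (7 / 5 : ℝ)) * (ENNReal.ofReal (5 / 2) * ENNReal.ofReal (log T)) := by
        rw [lintegral_indicator measurableSet_Ici, lintegral_indicator measurableSet_Icc,
          lintegral_Ici_rpow_neg one_pos (by norm_num), lintegral_Icc_inv one_pos hT, div_one]
        norm_num
    _ = ENNReal.ofReal (5 / 2 * T ^ (7 / 5 : ℝ) * log T) := by
        rw [← ENNReal.ofReal_mul (by norm_num), ← ENNReal.ofReal_mul (by positivity)]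
        ring_nf

noncomputable def count (T : ℝ) : ℝ := ∫ x in region T, weight x

lemma ads4Count_eq_count (μ : ℝ) : ads4Count μ = count (μ ^ (-(4 : ℝ))) := rfl

lemma count_eq_toReal (T : ℝ) :
    count T = (∫⁻ x in region T, ENNReal.ofReal (weight x)).toReal := by
  refine integral_eq_lintegral_of_nonneg_ae (ae_restrict_of_forall_mem (measurableSet_region T) ?_)
    (by unfold weight; fun_prop : Continuous weight).aestronglyMeasurable
  rintro ⟨N, k₁, k₂, k₃⟩ hx
  obtain ⟨-, -, ⟨hk₂, -⟩, ⟨hk₃, -⟩⟩ := bounds_of_mem_region hx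
  dsimp only [weight, Pi.zero_apply]
  positivity

lemma count_bounds {T : ℝ} (hT : 2 ^ 16 ≤ T) :
    256 / (2 ^ 16) ^ (7 / 5 : ℝ) * T ^ (7 / 5 : ℝ) ≤ count T ∧
      count T ≤ 5 / 2 * T ^ (7 / 5 : ℝ) * log T := by
  have hT1 : 1 ≤ T := le_trans (by norm_num) hT
  have hupper := lintegral_region_le hT1
  set c := (T / 2 ^ 16) ^ (5⁻¹ : ℝ) with hc
  have hc1 : 1 ≤ c := one_le_rpow ((one_le_div (by norm_num)).2 hT) (by norm_num)
  have hc5 : 2 ^ 16 * c ^ 5 ≤ T := by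
    have : c ^ 5 = T / 2 ^ 16 := rpow_inv_natCast_pow (by positivity) (by norm_num)
    rw [this, mul_div_cancel₀ _ (by norm_num)]
  have hc7 : 256 * c ^ 7 = 256 / (2 ^ 16) ^ (7 / 5 : ℝ) * T ^ (7 / 5 : ℝ) := by
    rw [hc, ← rpow_natCast, ← rpow_mul (by positivity), div_rpow (by positivity) (by norm_num)]
    norm_num
    ring
  rw [count_eq_toReal, ← hc7]
  constructor
  · refine (ENNReal.ofReal_le_iff_le_toReal (ne_top_of_le_ne_top ENNReal.ofReal_ne_top hupper)).1 ?_
    exact ofReal_le_lintegral_region hc1 hc5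
  · exact ENNReal.toReal_le_of_le_ofReal (by positivity [log_nonneg hT1]) hupper

lemma tendsto_log_count_div_log :
    Tendsto (fun T => log (count T) / log T) atTop (𝓝 (7 / 5)) :=
  tendsto_log_div_log_of_bounds (by positivity) (by norm_num : (0 : ℝ) < 5 / 2)
    ((eventually_ge_atTop (2 ^ 16)).mono fun _ hT => (count_bounds hT).1)
    ((eventually_ge_atTop (2 ^ 16)).mono fun _ hT => (count_bounds hT).2)

end Ads4

theorem ads4_count_growth :
    Tendsto (fun μ : ℝ => Real.log (ads4Count μ) / Real.log (1 / μ))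
      (nhdsWithin 0 (Set.Ioi 0)) (nhds (28 / 5)) := by
  have key := (Ads4.tendsto_log_count_div_log.comp
    (tendsto_rpow_neg_nhdsGT_zero (by norm_num : -(4 : ℝ) < 0))).const_mul 4
  rw [show (4 : ℝ) * (7 / 5) = 28 / 5 by norm_num] at key
  refine key.congr' (eventually_mem_nhdsWithin.mono fun μ (hμ : 0 < μ) => ?_)
  simp only [Function.comp_apply, Ads4.ads4Count_eq_count]
  rw [log_rpow hμ, one_div, log_inv]
  ring
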